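/- arXiv:2011.06061 — 4 statements merged into one kernel-verified Lean document; each statement's English description precedes it below -/
import Mathlib

section
/- Let M ~ N(μ, σ²) and let Φ denote the standard normal CDF. For any constants c, b ∈ ℝ, E[Φ(c + b·M)] = Φ((c + b·μ)/√(1 + b²σ²)). -/
open MeasureTheory ProbabilityTheory

/-! Φ is the distribution function of `Z ~ N(0, 1)`, so for `Z` independent of `M`,
`E[Φ(c + bM)] = P(Z - bM ≤ c)`. The law of `Z - bM` is the convolution
`N(0, 1) ∗ N(-bμ, b²σ²) = N(-bμ, 1 + b²σ²)`, and standardizing gives the right-hand side. -/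

open Set Real
open scoped NNReal

lemma gaussianPDFReal_zero_one (s : ℝ) :
    gaussianPDFReal 0 1 s = (2 * π) ^ (-(1:ℝ)/2) * exp (-s ^ 2 / 2) := by
  have : (2 * π) ^ (-(1:ℝ)/2) = (√(2 * π))⁻¹ := by
    rw [neg_div, rpow_neg (by positivity), sqrt_eq_rpow]
  rw [this]
  simp [gaussianPDFReal, neg_div]

lemma cdf_gaussianReal_eq_setIntegral (μ : ℝ) {v : ℝ≥0} (hv : v ≠ 0) (t : ℝ) :
    cdf (gaussianReal μ v) t = ∫ s in Iic t, gaussianPDFReal μ v s := by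
  rw [cdf_eq_real, measureReal_def, gaussianReal_apply_eq_integral _ hv,
    ENNReal.toReal_ofReal
      (setIntegral_nonneg measurableSet_Iic fun s _ ↦ gaussianPDFReal_nonneg μ v s)]

@[fun_prop]
lemma measurable_cdf (μ : Measure ℝ) : Measurable (cdf μ) := (cdf μ).mono.measurable

lemma cdf_gaussianReal (μ : ℝ) {v : ℝ≥0} (hv : v ≠ 0) (x : ℝ) :
    cdf (gaussianReal μ v) x = cdf (gaussianReal 0 1) ((x - μ) / √v) := by
  have hσ : 0 < √(v : ℝ) := sqrt_pos.2 (by positivity)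
  have hmap : gaussianReal μ v = ((gaussianReal 0 1).map (√(v : ℝ) * ·)).map (μ + ·) := by
    rw [gaussianReal_map_const_mul, gaussianReal_map_const_add]
    congr 1
    · simp
    · ext; simp [sq_sqrt v.coe_nonneg]
  rw [cdf_eq_real, cdf_eq_real, measureReal_def, measureReal_def, hmap,
    Measure.map_map (by fun_prop) (by fun_prop), Measure.map_apply (by fun_prop) measurableSet_Iic]
  congr 2
  ext z
  simp [le_div_iff₀ hσ, mul_comm, le_sub_iff_add_le']

lemma integral_cdf_sub_eq_cdf_conv (μ ν : Measure ℝ) [IsProbabilityMeasure μ]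
    [IsProbabilityMeasure ν] (c : ℝ) :
    ∫ y, cdf μ (c - y) ∂ν = cdf (μ ∗ ν) c := by
  rw [integral_eq_lintegral_of_nonneg_ae (.of_forall fun y ↦ cdf_nonneg μ _)
    (by fun_prop : Measurable fun y ↦ cdf μ (c - y)).aestronglyMeasurable,
    cdf_eq_real, measureReal_def, Measure.conv_comm, ← lintegral_indicator_one measurableSet_Iic,
    Measure.lintegral_conv (measurable_one.indicator measurableSet_Iic)]
  congr 1
  refine lintegral_congr fun y ↦ ?_
  rw [ofReal_cdf, ← lintegral_indicator_one measurableSet_Iic]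
  congr with x
  simp [indicator_apply, le_sub_iff_add_le']

theorem gaussian_probit_identity (m : ℝ) (v : NNReal) (c b : ℝ)
    (Φ : ℝ → ℝ)
    (hΦ : ∀ t, Φ t = ∫ s in Set.Iic t, (2 * Real.pi) ^ (-(1:ℝ)/2) * Real.exp (-s ^ 2 / 2)) :
    ∫ x, Φ (c + b * x) ∂(gaussianReal m v) =
      Φ ((c + b * m) / Real.sqrt (1 + b ^ 2 * (v : ℝ))) := by
  have hΦ_cdf : Φ = cdf (gaussianReal 0 1) := funext fun t ↦ by
    simp only [hΦ, cdf_gaussianReal_eq_setIntegral 0 one_ne_zero, gaussianPDFReal_zero_one]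
  rw [hΦ_cdf]
  calc ∫ x, cdf (gaussianReal 0 1) (c + b * x) ∂(gaussianReal m v)
      = ∫ y, cdf (gaussianReal 0 1) (c - y) ∂((gaussianReal m v).map (-b * ·)) := by
        rw [integral_map (f := fun y ↦ cdf (gaussianReal 0 1) (c - y)) (by fun_prop)
          (by fun_prop : Measurable fun y ↦ cdf (gaussianReal 0 1) (c - y)).aestronglyMeasurable]
        simp [sub_eq_add_neg]
    _ = cdf (gaussianReal 0 1 ∗ gaussianReal (-b * m) (.mk ((-b) ^ 2) (sq_nonneg _) * v)) c := by
        rw [gaussianReal_map_const_mul, integral_cdf_sub_eq_cdf_conv]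
    _ = _ := by
        rw [gaussianReal_conv_gaussianReal, cdf_gaussianReal _ (by positivity)]
        congr 2
        · ring
        · simp
end

section
/- Let σ(t) = 1/(1 + e^{-t}) be the logistic function, let M' and M'' be real random variables with finite moment generating functions at b, and for k ∈ ℝ define e'(k) = E[σ(k + b·M')] and e''(k) = E[σ(k + b·M'')]. Assume e'(k), e''(k) ∈ (0,1) for all k. Then as k → -∞, the odds ratio [e''(k)/(1-e''(k))] / [e'(k)/(1-e'(k))] converges to E[e^{b·M''}]/E[e^{b·M'}]. -/
/-!
As `k → -∞`, `e^{-k} σ(k + t) = 1 / (e^k + e^{-t})` increases to `e^t`, so by dominated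
convergence (with dominating function `e^{b M}`) `e^{-k} E[σ(k + b M)] → E[e^{b M}]`. In
particular both exposure probabilities tend to `0`, the odds are asymptotic to the
probabilities, and the odds ratio tends to the ratio of the two moment generating functions.
-/

open MeasureTheory Filter Real Topology

noncomputable def odds (p : ℝ) : ℝ := p / (1 - p)

lemma tendsto_zero_of_tendsto_mul_atTop {α : Type*} {l : Filter α} {c p : α → ℝ} {A : ℝ}
    (hc : Tendsto c l atTop) (hp : Tendsto (fun x => p x * c x) l (𝓝 A)) :
    Tendsto p l (𝓝 0) :=
  (hp.div_atTop hc).congr' <|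
    (hc.eventually_gt_atTop 0).mono fun _ hx => mul_div_cancel_right₀ _ hx.ne'

lemma odds_div_odds_eq {c : ℝ} (hc : c ≠ 0) (p q : ℝ) :
    odds q / odds p = q * c / (p * c) * ((1 - p) / (1 - q)) := by
  rw [odds, odds, mul_div_mul_right _ _ hc, div_div_div_eq, div_mul_div_comm, mul_comm (1 - q)]

lemma tendsto_odds_div_odds_of_tendsto_mul_atTop {α : Type*} {l : Filter α} {c p q : α → ℝ}
    {A B : ℝ} (hc : Tendsto c l atTop) (hp : Tendsto (fun x => p x * c x) l (𝓝 A))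
    (hq : Tendsto (fun x => q x * c x) l (𝓝 B)) (hA : A ≠ 0) :
    Tendsto (fun x => odds (q x) / odds (p x)) l (𝓝 (B / A)) := by
  have hp₀ := tendsto_zero_of_tendsto_mul_atTop hc hp
  have hq₀ := tendsto_zero_of_tendsto_mul_atTop hc hq
  have h_one_sub : ∀ {r : α → ℝ}, Tendsto r l (𝓝 0) → Tendsto (fun x => 1 - r x) l (𝓝 (1 - 0)) :=
    tendsto_const_nhds.sub
  have hlim := (hq.div hp hA).mul <| (h_one_sub hp₀).div (h_one_sub hq₀) (by norm_num)
  rw [sub_zero, div_one, mul_one] at hlim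
  refine hlim.congr' ((hc.eventually_gt_atTop 0).mono fun x hx => ?_)
  exact (odds_div_odds_eq hx.ne' (p x) (q x)).symm

lemma sigmoid_add_mul_exp_neg (k t : ℝ) :
    sigmoid (k + t) * exp (-k) = (exp k + exp (-t))⁻¹ := by
  rw [sigmoid_def, exp_neg k, ← mul_inv, add_mul, one_mul, ← exp_add]
  ring_nf

lemma inv_exp_add_exp_neg_le_exp (k t : ℝ) : (exp k + exp (-t))⁻¹ ≤ exp t :=
  calc (exp k + exp (-t))⁻¹ ≤ (exp (-t))⁻¹ :=
        inv_anti₀ (exp_pos _) (le_add_of_nonneg_left (exp_pos k).le)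
    _ = exp t := by rw [exp_neg, inv_inv]

lemma tendsto_inv_exp_add_exp_neg_atBot (t : ℝ) :
    Tendsto (fun k => (exp k + exp (-t))⁻¹) atBot (𝓝 (exp t)) := by
  have h := (tendsto_exp_atBot.add_const (exp (-t))).inv₀ (by simp [exp_ne_zero])
  simpa [exp_neg] using h

lemma tendsto_integral_sigmoid_mul_exp_neg_atBot {Ω : Type*} [MeasurableSpace Ω]
    {μ : Measure Ω} {g : Ω → ℝ} (hg : Integrable (fun ω => exp (g ω)) μ) :
    Tendsto (fun k => (∫ ω, sigmoid (k + g ω) ∂μ) * exp (-k)) atBot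
      (𝓝 (∫ ω, exp (g ω) ∂μ)) := by
  have hg_meas : AEMeasurable g μ := by
    simpa [Function.comp_def] using measurable_log.comp_aemeasurable hg.aemeasurable
  simp_rw [← integral_mul_const, sigmoid_add_mul_exp_neg]
  refine tendsto_integral_filter_of_dominated_convergence _ ?_ ?_ hg ?_
  · exact .of_forall fun k =>
      ((measurable_exp.comp_aemeasurable hg_meas.neg).const_add _).inv.aestronglyMeasurable
  · refine .of_forall fun k => .of_forall fun ω => ?_
    rw [norm_of_nonneg (by positivity)]
    exact inv_exp_add_exp_neg_le_exp k (g ω)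
  · exact .of_forall fun ω => tendsto_inv_exp_add_exp_neg_atBot (g ω)

theorem rare_disease_odds_ratio_limit_general
    {Ω : Type*} [MeasurableSpace Ω] (μ : Measure Ω) [IsProbabilityMeasure μ]
    (M' M'' : Ω → ℝ) (b : ℝ)
    (hM' : Integrable (fun ω => Real.exp (b * M' ω)) μ)
    (hM'' : Integrable (fun ω => Real.exp (b * M'' ω)) μ)
    (σ : ℝ → ℝ) (hσ : ∀ t, σ t = 1 / (1 + Real.exp (-t)))
    (e' e'' : ℝ → ℝ)
    (he' : ∀ k, e' k = ∫ ω, σ (k + b * M' ω) ∂μ)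
    (he'' : ∀ k, e'' k = ∫ ω, σ (k + b * M'' ω) ∂μ) :
    Tendsto (fun k => (e'' k / (1 - e'' k)) / (e' k / (1 - e' k))) atBot
      (nhds ((∫ ω, Real.exp (b * M'' ω) ∂μ) / (∫ ω, Real.exp (b * M' ω) ∂μ))) := by
  obtain rfl : σ = sigmoid := funext fun t => by rw [hσ, one_div, sigmoid_def]
  obtain rfl : e' = _ := funext he'
  obtain rfl : e'' = _ := funext he''
  exact tendsto_odds_div_odds_of_tendsto_mul_atTop
    (tendsto_exp_atTop.comp tendsto_neg_atBot_atTop)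
    (tendsto_integral_sigmoid_mul_exp_neg_atBot hM')
    (tendsto_integral_sigmoid_mul_exp_neg_atBot hM'') (integral_exp_pos hM').ne'

theorem rare_disease_odds_ratio_limit
    {Ω : Type*} [MeasurableSpace Ω] (μ : Measure Ω) [IsProbabilityMeasure μ]
    (M' M'' : Ω → ℝ) (b : ℝ)
    (hM' : Integrable (fun ω => Real.exp (b * M' ω)) μ)
    (hM'' : Integrable (fun ω => Real.exp (b * M'' ω)) μ)
    (σ : ℝ → ℝ) (hσ : ∀ t, σ t = 1 / (1 + Real.exp (-t)))
    (e' e'' : ℝ → ℝ)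
    (he' : ∀ k, e' k = ∫ ω, σ (k + b * M' ω) ∂μ)
    (he'' : ∀ k, e'' k = ∫ ω, σ (k + b * M'' ω) ∂μ)
    (he'mem : ∀ k, e' k ∈ Set.Ioo (0 : ℝ) 1)
    (he''mem : ∀ k, e'' k ∈ Set.Ioo (0 : ℝ) 1) :
    Tendsto (fun k => (e'' k / (1 - e'' k)) / (e' k / (1 - e' k))) atBot
      (nhds ((∫ ω, Real.exp (b * M'' ω) ∂μ) / (∫ ω, Real.exp (b * M' ω) ∂μ))) :=
  rare_disease_odds_ratio_limit_general μ M' M'' b hM' hM'' σ hσ e' e'' he' he''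
end

section
/- Work on a probability space with random variables X (real-valued), M, and a family of counterfactual random variables M^{x} and Y^{x,m} indexed by x, m, all taking values in finite sets. Assume: (i) M^{x'} ⫫ X for all x'; (ii) Y^{x'',m} ⫫ M^{x'} for all x', x'', m; (iii) Y^{x'',m} ⫫ X for all x'', m; (iv) Y^{x'',m} ⫫ M | X for all x'', m; (v) consistency: X = x' implies M^{x'} = M; (vi) consistency: X = x', M = m implies Y^{x',m} = Y. Then E[Y^{x'', M^{x'}}] = Σ_m E[Y | X = x'', M = m] · P(M = m | X = x'), provided P(X = x') > 0, P(X = x'') > 0, and P(X = x'', M = m) > 0 for all m in the support of M^{x'}. -/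
/-!
Split according to the value `m` of `M^{x'}`. By (ii), `Y^{x'', m}` keeps its unconditional mean
on the event `M^{x'} = m`, so the left side is `∑ₘ P(M^{x'} = m) E[Y^{x'', m}]`. By (i) and (v),
`P(M^{x'} = m) = P(M = m | X = x')`. By (iii) and (iv), `Y^{x'', m}` is independent of the event
`{X = x'', M = m}`, on which it coincides with `Y` by (vi); so
`E[Y^{x'', m}] = E[Y | X = x'', M = m]` as soon as that event is not null.
-/

open MeasureTheory ProbabilityTheory

namespace MeasureTheory

variable {Ω : Type*} [MeasurableSpace Ω] {μ : Measure Ω}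

theorem integral_eq_sum_setIntegral_preimage_singleton {ι E : Type*} [Fintype ι]
    [MeasurableSpace ι] [MeasurableSingletonClass ι] [NormedAddCommGroup E] [NormedSpace ℝ E]
    {g : Ω → ι} (hg : Measurable g) {F : ι → Ω → E} (hF : ∀ i, Integrable (F i) μ) :
    ∫ ω, F (g ω) ω ∂μ = ∑ i, ∫ ω in g ⁻¹' {i}, F i ω ∂μ := by
  have hfiber (i : ι) : MeasurableSet (g ⁻¹' {i}) := hg (measurableSet_singleton i)
  have hEq (i : ι) : Set.EqOn (fun ω ↦ F (g ω) ω) (F i) (g ⁻¹' {i}) :=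
    fun ω (hω : g ω = i) ↦ congrArg (F · ω) hω
  have hcover : (⋃ i, g ⁻¹' {i}) = Set.univ := Set.iUnion_eq_univ_iff.2 fun ω ↦ ⟨g ω, rfl⟩
  rw [← setIntegral_univ, ← hcover, integral_iUnion_fintype hfiber (pairwise_disjoint_fiber g)
    fun i ↦ (hF i).integrableOn.congr_fun (hEq i).symm (hfiber i)]
  exact Finset.sum_congr rfl fun i _ ↦ setIntegral_congr_fun (hfiber i) (hEq i)

theorem measure_inter_inter_eq_mul_of_indep_of_condIndep [IsFiniteMeasure μ] {E A B : Set Ω}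
    (hind : μ (E ∩ A) = μ E * μ A) (hcond : μ (E ∩ B ∩ A) * μ A = μ (E ∩ A) * μ (B ∩ A)) :
    μ (E ∩ (A ∩ B)) = μ E * μ (A ∩ B) := by
  by_cases hA : μ A = 0
  · have hEAB : μ (E ∩ (A ∩ B)) = 0 := measure_mono_null (fun _ h ↦ h.2.1) hA
    have hAB : μ (A ∩ B) = 0 := measure_mono_null Set.inter_subset_left hA
    rw [hEAB, hAB, mul_zero]
  · refine (ENNReal.mul_left_inj hA (measure_ne_top μ A)).1 ?_
    calc μ (E ∩ (A ∩ B)) * μ A = μ (E ∩ A) * μ (B ∩ A) := by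
          rw [← hcond, Set.inter_comm A B, Set.inter_assoc]
      _ = μ E * μ (A ∩ B) * μ A := by rw [hind, Set.inter_comm B A]; ring

end MeasureTheory

namespace ProbabilityTheory

variable {Ω : Type*} [MeasurableSpace Ω] {μ : Measure Ω}

theorem setIntegral_eq_measureReal_mul_integral_of_forall_measure_inter_eq_mul
    [IsProbabilityMeasure μ] {f : Ω → ℝ} (hf : Measurable f) {B : Set Ω} (hB : MeasurableSet B)
    (h : ∀ s, MeasurableSet s → μ (f ⁻¹' s ∩ B) = μ (f ⁻¹' s) * μ B) :
    ∫ ω in B, f ω ∂μ = μ.real B * ∫ ω, f ω ∂μ := by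
  have hle : MeasurableSpace.generateFrom {B} ≤ ‹MeasurableSpace Ω› :=
    MeasurableSpace.generateFrom_le fun _ hB' ↦ Set.mem_singleton_iff.1 hB' ▸ hB
  have hindep :
      Indep (MeasurableSpace.comap f inferInstance) (MeasurableSpace.generateFrom {B}) μ :=
    IndepSets.indep hf.comap_le hle (MeasurableSpace.isPiSystem_measurableSet.comap f)
      (IsPiSystem.singleton B) (MeasurableSpace.comap_eq_generateFrom _ f) rfl <|
      (IndepSets_iff _ _ μ).2 fun _ _ ⟨s, hs, hfs⟩ hB' ↦ by
        rw [← hfs, Set.mem_singleton_iff.1 hB']; exact h s hs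
  exact hindep.symm.setIntegral_eq_mul hle hf.aemeasurable
    (MeasurableSpace.measurableSet_generateFrom rfl) aestronglyMeasurable_id

theorem integral_eq_setIntegral_div_of_forall_measure_inter_eq_mul_of_eqOn
    [IsProbabilityMeasure μ] {f g : Ω → ℝ} (hf : Measurable f) {B : Set Ω} (hB : MeasurableSet B)
    (hB₀ : μ B ≠ 0) (h : ∀ s, MeasurableSet s → μ (f ⁻¹' s ∩ B) = μ (f ⁻¹' s) * μ B)
    (hfg : Set.EqOn f g B) :
    ∫ ω, f ω ∂μ = (∫ ω in B, g ω ∂μ) / μ.real B := by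
  rw [← setIntegral_congr_fun hB hfg,
    setIntegral_eq_measureReal_mul_integral_of_forall_measure_inter_eq_mul hf hB h,
    mul_div_cancel_left₀ _ ((measureReal_ne_zero_iff).2 hB₀)]

theorem measureReal_preimage_eq_div_of_indepFun_of_eqOn {β γ : Type*} [MeasurableSpace β]
    [MeasurableSpace γ] [IsFiniteMeasure μ] {g h : Ω → β} {X : Ω → γ} (hind : IndepFun g X μ)
    {t : Set β} {s : Set γ} (hgh : Set.EqOn g h (X ⁻¹' s)) (ht : MeasurableSet t)
    (hs : MeasurableSet s) (hX : μ (X ⁻¹' s) ≠ 0) :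
    μ.real (g ⁻¹' t) = μ.real (X ⁻¹' s ∩ h ⁻¹' t) / μ.real (X ⁻¹' s) := by
  have hfiber : g ⁻¹' t ∩ X ⁻¹' s = X ⁻¹' s ∩ h ⁻¹' t := by
    ext ω
    simp only [Set.mem_inter_iff, Set.mem_preimage]
    exact ⟨fun ⟨hg, hω⟩ ↦ ⟨hω, hgh hω ▸ hg⟩, fun ⟨hω, hh⟩ ↦ ⟨(hgh hω).symm ▸ hh, hω⟩⟩
  rw [← hfiber, measureReal_def, measureReal_def, measureReal_def,
    hind.measure_inter_preimage_eq_mul t s ht hs, ENNReal.toReal_mul,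
    mul_div_cancel_right₀ _ (ENNReal.toReal_ne_zero.2 ⟨hX, measure_ne_top μ _⟩)]

end ProbabilityTheory

theorem mediation_identification_general
    {Ω : Type*} [MeasurableSpace Ω] (μ : Measure Ω) [IsProbabilityMeasure μ]
    {𝓜 : Type*} [Fintype 𝓜] [MeasurableSpace 𝓜] [MeasurableSingletonClass 𝓜]
    (X : Ω → ℝ) (M : Ω → 𝓜) (Y : Ω → ℝ)
    (Mc : ℝ → Ω → 𝓜) (Yc : ℝ → 𝓜 → Ω → ℝ)
    (hX : Measurable X) (hM : Measurable M)
    (hMc : ∀ a, Measurable (Mc a)) (hYc : ∀ a m, Measurable (Yc a m))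
    (hYcint : ∀ a m, Integrable (Yc a m) μ)
    -- (i) M^{x'} ⫫ X
    (indep₁ : ∀ a, IndepFun (Mc a) X μ)
    -- (ii) Y^{x'',m} ⫫ M^{x'}
    (indep₂ : ∀ a b m, IndepFun (Yc b m) (Mc a) μ)
    -- (iii) Y^{x'',m} ⫫ X
    (indep₃ : ∀ b m, IndepFun (Yc b m) X μ)
    -- (iv) Y^{x'',m} ⫫ M | X  (elementary product form)
    (indep₄ : ∀ b m (s : Set ℝ), MeasurableSet s → ∀ (m₀ : 𝓜) (x₀ : ℝ),
      μ ({ω | Yc b m ω ∈ s} ∩ {ω | M ω = m₀} ∩ {ω | X ω = x₀}) * μ {ω | X ω = x₀} =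
        μ ({ω | Yc b m ω ∈ s} ∩ {ω | X ω = x₀}) * μ ({ω | M ω = m₀} ∩ {ω | X ω = x₀}))
    -- (v) consistency for the mediator
    (cons₁ : ∀ a ω, X ω = a → Mc a ω = M ω)
    -- (vi) consistency for the outcome
    (cons₂ : ∀ a m ω, X ω = a → M ω = m → Yc a m ω = Y ω)
    (x' x'' : ℝ)
    (hpos' : 0 < μ {ω | X ω = x'})
    (hpossupp : ∀ m : 𝓜, 0 < μ {ω | Mc x' ω = m} →
      0 < μ {ω | X ω = x'' ∧ M ω = m}) :
    ∫ ω, Yc x'' (Mc x' ω) ω ∂μ =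
      ∑ m : 𝓜,
        ((∫ ω in {ω | X ω = x'' ∧ M ω = m}, Y ω ∂μ) /
            (μ {ω | X ω = x'' ∧ M ω = m}).toReal) *
          ((μ {ω | X ω = x' ∧ M ω = m}).toReal / (μ {ω | X ω = x'}).toReal) := by
  have hmediator (m : 𝓜) : μ.real (Mc x' ⁻¹' {m}) =
      μ.real {ω | X ω = x' ∧ M ω = m} / μ.real {ω | X ω = x'} :=
    measureReal_preimage_eq_div_of_indepFun_of_eqOn (s := {x'}) (indep₁ x') (cons₁ x')
      (measurableSet_singleton m) (measurableSet_singleton x') hpos'.ne'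
  have houtcome (m : 𝓜) (hm : 0 < μ {ω | X ω = x'' ∧ M ω = m}) : ∫ ω, Yc x'' m ω ∂μ =
      (∫ ω in {ω | X ω = x'' ∧ M ω = m}, Y ω ∂μ) / μ.real {ω | X ω = x'' ∧ M ω = m} :=
    integral_eq_setIntegral_div_of_forall_measure_inter_eq_mul_of_eqOn (hYc x'' m)
      ((hX (measurableSet_singleton x'')).inter (hM (measurableSet_singleton m))) hm.ne'
      (fun s hs ↦ measure_inter_inter_eq_mul_of_indep_of_condIndep
        ((indep₃ x'' m).measure_inter_preimage_eq_mul s {x''} hs (measurableSet_singleton x''))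
        (indep₄ x'' m s hs m x''))
      fun ω hω ↦ cons₂ x'' m ω hω.1 hω.2
  simp only [← measureReal_def]
  rw [integral_eq_sum_setIntegral_preimage_singleton (hMc x') (hYcint x'')]
  refine Finset.sum_congr rfl fun m _ ↦ ?_
  rw [setIntegral_eq_measureReal_mul_integral_of_forall_measure_inter_eq_mul (hYc x'' m)
    (hMc x' (measurableSet_singleton m)) fun s hs ↦ (indep₂ x' x'' m).measure_inter_preimage_eq_mul
      s {m} hs (measurableSet_singleton m), ← hmediator m]
  by_cases hm : μ (Mc x' ⁻¹' {m}) = 0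
  · rw [(measureReal_eq_zero_iff).2 hm, zero_mul, mul_zero]
  · rw [houtcome m (hpossupp m (pos_iff_ne_zero.2 hm)), mul_comm]

/-- Mediation identification formula in the discrete counterfactual setting. -/
theorem mediation_identification
    {Ω : Type*} [MeasurableSpace Ω] (μ : Measure Ω) [IsProbabilityMeasure μ]
    {𝓜 : Type*} [Fintype 𝓜] [MeasurableSpace 𝓜] [MeasurableSingletonClass 𝓜]
    (X : Ω → ℝ) (M : Ω → 𝓜) (Y : Ω → ℝ)
    (Mc : ℝ → Ω → 𝓜) (Yc : ℝ → 𝓜 → Ω → ℝ)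
    (hX : Measurable X) (hM : Measurable M) (hY : Measurable Y)
    (hMc : ∀ a, Measurable (Mc a)) (hYc : ∀ a m, Measurable (Yc a m))
    (hYint : Integrable Y μ) (hYcint : ∀ a m, Integrable (Yc a m) μ)
    -- (i) M^{x'} ⫫ X
    (indep₁ : ∀ a, IndepFun (Mc a) X μ)
    -- (ii) Y^{x'',m} ⫫ M^{x'}
    (indep₂ : ∀ a b m, IndepFun (Yc b m) (Mc a) μ)
    -- (iii) Y^{x'',m} ⫫ X
    (indep₃ : ∀ b m, IndepFun (Yc b m) X μ)
    -- (iv) Y^{x'',m} ⫫ M | X  (elementary product form)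
    (indep₄ : ∀ b m (s : Set ℝ), MeasurableSet s → ∀ (m₀ : 𝓜) (x₀ : ℝ),
      μ ({ω | Yc b m ω ∈ s} ∩ {ω | M ω = m₀} ∩ {ω | X ω = x₀}) * μ {ω | X ω = x₀} =
        μ ({ω | Yc b m ω ∈ s} ∩ {ω | X ω = x₀}) * μ ({ω | M ω = m₀} ∩ {ω | X ω = x₀}))
    -- (v) consistency for the mediator
    (cons₁ : ∀ a ω, X ω = a → Mc a ω = M ω)
    -- (vi) consistency for the outcome
    (cons₂ : ∀ a m ω, X ω = a → M ω = m → Yc a m ω = Y ω)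
    (x' x'' : ℝ)
    (hpos' : 0 < μ {ω | X ω = x'}) (hpos'' : 0 < μ {ω | X ω = x''})
    (hpossupp : ∀ m : 𝓜, 0 < μ {ω | Mc x' ω = m} →
      0 < μ {ω | X ω = x'' ∧ M ω = m}) :
    ∫ ω, Yc x'' (Mc x' ω) ω ∂μ =
      ∑ m : 𝓜,
        ((∫ ω in {ω | X ω = x'' ∧ M ω = m}, Y ω ∂μ) /
            (μ {ω | X ω = x'' ∧ M ω = m}).toReal) *
          ((μ {ω | X ω = x' ∧ M ω = m}).toReal / (μ {ω | X ω = x'}).toReal) :=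
  mediation_identification_general μ X M Y Mc Yc hX hM hMc hYc hYcint indep₁ indep₂ indep₃ indep₄
    cons₁ cons₂ x' x'' hpos' hpossupp
end

section
/- In the discrete counterfactual setting with assumptions (i)–(vi) as in the identification theorem, together with the composition axiom Y^{x'} = Y^{x', M^{x'}}, the total effect decomposes as E[Y^{x''}] - E[Y^{x'}] = (E[Y^{x'', M^{x'}}] - E[Y^{x'}]) + (E[Y^{x''}] - E[Y^{x'', M^{x'}}]), i.e., TE(x',x'') = DE(x',x'') + IE(x',x''), and each term is identified: DE(x',x'') = Σ_m (E[Y|X=x'',M=m] - E[Y|X=x',M=m])·P(M=m|X=x') and IE(x',x'') = Σ_m E[Y|X=x'',M=m]·(P(M=m|X=x'') - P(M=m|X=x')). -/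
/-!
Under the independence assumptions the cross-world quantity `E[Y^{x'', M^{x'}}]` is a mixture:
conditioning on the finitely many values of `M^{x'}` and using `Y^{x'',m} ⫫ M^{x'}` gives
`Σ_m E[Y^{x'',m}] P(M^{x'} = m)`. Each factor is then identified from observables:
`M^{x'} ⫫ X` and consistency give `P(M^{x'} = m) = P(M = m | X = x')`, while
`Y^{x'',m} ⫫ X` together with `Y^{x'',m} ⫫ M | X` makes `Y^{x'',m}` independent of the event
`{X = x'', M = m}`, on which it coincides with `Y`. Composition identifies `E[Y^{x}]` as the
special case `x' = x''`, and the decomposition `TE = DE + IE` is a telescoping identity.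
-/

open MeasureTheory ProbabilityTheory

section Integration

variable {Ω : Type*} [MeasurableSpace Ω] {μ : Measure Ω}

theorem setIntegral_eq_measure_mul_integral_of_indep {f : Ω → ℝ} {A : Set Ω}
    (hf : Measurable f)
    (hindep : ∀ s, MeasurableSet s → μ (f ⁻¹' s ∩ A) = μ (f ⁻¹' s) * μ A) :
    ∫ ω in A, f ω ∂μ = (μ A).toReal * ∫ ω, f ω ∂μ := by
  have hmap : (μ.restrict A).map f = μ A • μ.map f := by
    ext s hs
    rw [Measure.map_apply hf hs, Measure.restrict_apply (hf hs), hindep s hs,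
      Measure.smul_apply, Measure.map_apply hf hs, smul_eq_mul, mul_comm]
  calc ∫ ω in A, f ω ∂μ = ∫ x, x ∂(μ.restrict A).map f :=
        (integral_map hf.aemeasurable aestronglyMeasurable_id).symm
    _ = (μ A).toReal * ∫ x, x ∂μ.map f := by
        rw [hmap, integral_smul_measure, smul_eq_mul]
    _ = (μ A).toReal * ∫ ω, f ω ∂μ :=
        congrArg _ (integral_map hf.aemeasurable aestronglyMeasurable_id)

theorem integral_comp_eq_sum_setIntegral_fiber {E ι : Type*} [NormedAddCommGroup E]
    [NormedSpace ℝ E] [Fintype ι] [MeasurableSpace ι] [MeasurableSingletonClass ι]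
    {g : Ω → ι} (hg : Measurable g) {F : ι → Ω → E} (hF : ∀ i, Integrable (F i) μ) :
    ∫ ω, F (g ω) ω ∂μ = ∑ i, ∫ ω in g ⁻¹' {i}, F i ω ∂μ := by
  have hsplit : ∀ ω, F (g ω) ω = ∑ i, (g ⁻¹' {i}).indicator (F i) ω := fun ω => by
    rw [Fintype.sum_eq_single (g ω) fun i (hi : i ≠ g ω) =>
      Set.indicator_of_notMem (s := g ⁻¹' {i}) (Ne.symm hi) (F i)]
    exact (Set.indicator_of_mem (s := g ⁻¹' {g ω}) rfl (F (g ω))).symm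
  simp_rw [hsplit]
  rw [integral_finsetSum _ fun i _ => (hF i).indicator (hg (measurableSet_singleton i))]
  exact Finset.sum_congr rfl fun i _ => integral_indicator (hg (measurableSet_singleton i))

theorem integral_comp_eq_sum_integral_mul_of_indepFun {ι : Type*} [Fintype ι]
    [MeasurableSpace ι] [MeasurableSingletonClass ι] {g : Ω → ι} (hg : Measurable g)
    {F : ι → Ω → ℝ} (hF : ∀ i, Measurable (F i)) (hFint : ∀ i, Integrable (F i) μ)
    (hindep : ∀ i, IndepFun (F i) g μ) :
    ∫ ω, F (g ω) ω ∂μ = ∑ i, (∫ ω, F i ω ∂μ) * (μ (g ⁻¹' {i})).toReal := by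
  rw [integral_comp_eq_sum_setIntegral_fiber hg hFint]
  refine Finset.sum_congr rfl fun i _ => ?_
  rw [setIntegral_eq_measure_mul_integral_of_indep (hF i) fun s hs =>
    (hindep i).measure_inter_preimage_eq_mul s {i} hs (measurableSet_singleton i), mul_comm]

end Integration

section Identification

variable {Ω β 𝓜 : Type*} [MeasurableSpace Ω] {μ : Measure Ω} [IsFiniteMeasure μ]
  [MeasurableSpace β] [MeasurableSingletonClass β]
  [MeasurableSpace 𝓜] [MeasurableSingletonClass 𝓜]

theorem measure_inter_inter_eq_mul_of_condIndep {S C B : Set Ω} (hB : μ B ≠ 0)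
    (hcond : μ (S ∩ C ∩ B) * μ B = μ (S ∩ B) * μ (C ∩ B))
    (hSB : μ (S ∩ B) = μ S * μ B) :
    μ (S ∩ (C ∩ B)) = μ S * μ (C ∩ B) := by
  refine (ENNReal.mul_left_inj hB (measure_ne_top μ B)).mp ?_
  rw [← Set.inter_assoc, hcond, hSB, mul_right_comm]

theorem ProbabilityTheory.IndepFun.toReal_measure_preimage_singleton_eq_div {X : Ω → β} {M M' : Ω → 𝓜}
    {a : β} (hindep : IndepFun M' X μ) (hcons : ∀ ω, X ω = a → M' ω = M ω)
    (ha : μ {ω | X ω = a} ≠ 0) (m : 𝓜) :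
    (μ (M' ⁻¹' {m})).toReal =
      (μ {ω | X ω = a ∧ M ω = m}).toReal / (μ {ω | X ω = a}).toReal := by
  have hevent : M' ⁻¹' {m} ∩ X ⁻¹' {a} = {ω | X ω = a ∧ M ω = m} := by
    ext ω
    simp only [Set.mem_inter_iff, Set.mem_preimage, Set.mem_singleton_iff, Set.mem_ofPred_eq]
    exact ⟨fun ⟨hm, hx⟩ => ⟨hx, hcons ω hx ▸ hm⟩, fun ⟨hx, hm⟩ => ⟨hcons ω hx ▸ hm, hx⟩⟩
  have hprod : μ {ω | X ω = a ∧ M ω = m} = μ (M' ⁻¹' {m}) * μ {ω | X ω = a} :=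
    hevent ▸ hindep.measure_inter_preimage_eq_mul {m} {a}
      (measurableSet_singleton m) (measurableSet_singleton a)
  have ha' : (μ {ω | X ω = a}).toReal ≠ 0 :=
    ENNReal.toReal_ne_zero.mpr ⟨ha, measure_ne_top μ _⟩
  rw [hprod, ENNReal.toReal_mul, mul_div_assoc, div_self ha', mul_one]

theorem integral_eq_setIntegral_div_of_condIndep {X : Ω → β} {M : Ω → 𝓜} {Y Y' : Ω → ℝ}
    {b : β} {m : 𝓜} (hX : Measurable X) (hM : Measurable M) (hY' : Measurable Y')
    (hindep : IndepFun Y' X μ)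
    (hcond : ∀ s, MeasurableSet s →
      μ ({ω | Y' ω ∈ s} ∩ {ω | M ω = m} ∩ {ω | X ω = b}) * μ {ω | X ω = b} =
        μ ({ω | Y' ω ∈ s} ∩ {ω | X ω = b}) * μ ({ω | M ω = m} ∩ {ω | X ω = b}))
    (hcons : ∀ ω, X ω = b → M ω = m → Y' ω = Y ω)
    (hb : μ {ω | X ω = b} ≠ 0) (hbm : μ {ω | X ω = b ∧ M ω = m} ≠ 0) :
    ∫ ω, Y' ω ∂μ =
      (∫ ω in {ω | X ω = b ∧ M ω = m}, Y ω ∂μ) / (μ {ω | X ω = b ∧ M ω = m}).toReal := by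
  have hevent : {ω | X ω = b ∧ M ω = m} = {ω | M ω = m} ∩ {ω | X ω = b} := by
    ext ω
    exact and_comm
  have hmeas : MeasurableSet {ω | X ω = b ∧ M ω = m} :=
    (hX (measurableSet_singleton b)).inter (hM (measurableSet_singleton m))
  have hY'Y : ∫ ω in {ω | X ω = b ∧ M ω = m}, Y' ω ∂μ =
      ∫ ω in {ω | X ω = b ∧ M ω = m}, Y ω ∂μ :=
    setIntegral_congr_fun hmeas fun ω hω => hcons ω hω.1 hω.2
  have hY'event : ∫ ω in {ω | X ω = b ∧ M ω = m}, Y' ω ∂μ =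
      (μ {ω | X ω = b ∧ M ω = m}).toReal * ∫ ω, Y' ω ∂μ := by
    refine setIntegral_eq_measure_mul_integral_of_indep hY' fun s hs => ?_
    rw [hevent]
    exact measure_inter_inter_eq_mul_of_condIndep hb (hcond s hs)
      (hindep.measure_inter_preimage_eq_mul s {b} hs (measurableSet_singleton b))
  have hbm' : (μ {ω | X ω = b ∧ M ω = m}).toReal ≠ 0 :=
    ENNReal.toReal_ne_zero.mpr ⟨hbm, measure_ne_top μ _⟩
  rw [← hY'Y, hY'event, mul_div_cancel_left₀ _ hbm']

end Identification

theorem mediation_effect_decomposition_general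
    {Ω : Type*} [MeasurableSpace Ω] (μ : Measure Ω) [IsProbabilityMeasure μ]
    {𝓜 : Type*} [Fintype 𝓜] [MeasurableSpace 𝓜] [MeasurableSingletonClass 𝓜]
    (X : Ω → ℝ) (M : Ω → 𝓜) (Y : Ω → ℝ)
    (Mc : ℝ → Ω → 𝓜) (Yc : ℝ → 𝓜 → Ω → ℝ) (Ycx : ℝ → Ω → ℝ)
    (hX : Measurable X) (hM : Measurable M)
    (hMc : ∀ a, Measurable (Mc a)) (hYc : ∀ a m, Measurable (Yc a m))
    (hYcint : ∀ a m, Integrable (Yc a m) μ)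
    -- (i) M^{x'} ⫫ X
    (indep₁ : ∀ a, IndepFun (Mc a) X μ)
    -- (ii) Y^{x'',m} ⫫ M^{x'}
    (indep₂ : ∀ a b m, IndepFun (Yc b m) (Mc a) μ)
    -- (iii) Y^{x'',m} ⫫ X
    (indep₃ : ∀ b m, IndepFun (Yc b m) X μ)
    -- (iv) Y^{x'',m} ⫫ M | X  (elementary product form)
    (indep₄ : ∀ b m (s : Set ℝ), MeasurableSet s → ∀ (m₀ : 𝓜) (x₀ : ℝ),
      μ ({ω | Yc b m ω ∈ s} ∩ {ω | M ω = m₀} ∩ {ω | X ω = x₀}) * μ {ω | X ω = x₀} =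
        μ ({ω | Yc b m ω ∈ s} ∩ {ω | X ω = x₀}) * μ ({ω | M ω = m₀} ∩ {ω | X ω = x₀}))
    -- (v) consistency for the mediator
    (cons₁ : ∀ a ω, X ω = a → Mc a ω = M ω)
    -- (vi) consistency for the outcome
    (cons₂ : ∀ a m ω, X ω = a → M ω = m → Yc a m ω = Y ω)
    -- composition: Y^{x} = Y^{x, M^{x}}
    (comp : ∀ a ω, Ycx a ω = Yc a (Mc a ω) ω)
    (x' x'' : ℝ)
    (hpos' : 0 < μ {ω | X ω = x'}) (hpos'' : 0 < μ {ω | X ω = x''})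
    (hposM : ∀ m : 𝓜, 0 < μ {ω | X ω = x' ∧ M ω = m} ∧
      0 < μ {ω | X ω = x'' ∧ M ω = m}) :
    ((∫ ω, Ycx x'' ω ∂μ) - (∫ ω, Ycx x' ω ∂μ) =
        ((∫ ω, Yc x'' (Mc x' ω) ω ∂μ) - (∫ ω, Ycx x' ω ∂μ)) +
          ((∫ ω, Ycx x'' ω ∂μ) - (∫ ω, Yc x'' (Mc x' ω) ω ∂μ))) ∧
    ((∫ ω, Yc x'' (Mc x' ω) ω ∂μ) - (∫ ω, Ycx x' ω ∂μ) =
        ∑ m : 𝓜,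
          (((∫ ω in {ω | X ω = x'' ∧ M ω = m}, Y ω ∂μ) /
              (μ {ω | X ω = x'' ∧ M ω = m}).toReal) -
            ((∫ ω in {ω | X ω = x' ∧ M ω = m}, Y ω ∂μ) /
              (μ {ω | X ω = x' ∧ M ω = m}).toReal)) *
            ((μ {ω | X ω = x' ∧ M ω = m}).toReal / (μ {ω | X ω = x'}).toReal)) ∧
    ((∫ ω, Ycx x'' ω ∂μ) - (∫ ω, Yc x'' (Mc x' ω) ω ∂μ) =
        ∑ m : 𝓜,
          ((∫ ω in {ω | X ω = x'' ∧ M ω = m}, Y ω ∂μ) /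
              (μ {ω | X ω = x'' ∧ M ω = m}).toReal) *
            (((μ {ω | X ω = x'' ∧ M ω = m}).toReal / (μ {ω | X ω = x''}).toReal) -
              ((μ {ω | X ω = x' ∧ M ω = m}).toReal / (μ {ω | X ω = x'}).toReal))) := by
  have mediation : ∀ a b, μ {ω | X ω = a} ≠ 0 → μ {ω | X ω = b} ≠ 0 →
      (∀ m, μ {ω | X ω = b ∧ M ω = m} ≠ 0) →
      ∫ ω, Yc b (Mc a ω) ω ∂μ = ∑ m : 𝓜,
        ((∫ ω in {ω | X ω = b ∧ M ω = m}, Y ω ∂μ) / (μ {ω | X ω = b ∧ M ω = m}).toReal) *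
          ((μ {ω | X ω = a ∧ M ω = m}).toReal / (μ {ω | X ω = a}).toReal) := by
    intro a b ha hb hbm
    rw [integral_comp_eq_sum_integral_mul_of_indepFun (hMc a) (hYc b) (hYcint b) (indep₂ a b)]
    refine Finset.sum_congr rfl fun m _ => ?_
    rw [integral_eq_setIntegral_div_of_condIndep hX hM (hYc b m) (indep₃ b m)
        (fun s hs => indep₄ b m s hs m b) (cons₂ b m) hb (hbm m),
      (indep₁ a).toReal_measure_preimage_singleton_eq_div (cons₁ a) ha m]
  have composition : ∀ a, ∫ ω, Ycx a ω ∂μ = ∫ ω, Yc a (Mc a ω) ω ∂μ := fun a =>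
    integral_congr_ae (ae_of_all μ (comp a))
  have natural' := mediation x' x' hpos'.ne' hpos'.ne' fun m => (hposM m).1.ne'
  have crossWorld := mediation x' x'' hpos'.ne' hpos''.ne' fun m => (hposM m).2.ne'
  have natural'' := mediation x'' x'' hpos''.ne' hpos''.ne' fun m => (hposM m).2.ne'
  refine ⟨by ring, ?_, ?_⟩
  · rw [composition, crossWorld, natural', ← Finset.sum_sub_distrib]
    exact Finset.sum_congr rfl fun m _ => by ring
  · rw [composition, natural'', crossWorld, ← Finset.sum_sub_distrib]
    exact Finset.sum_congr rfl fun m _ => by ring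

/-- Total effect decomposition TE = DE + IE and identification of the natural
direct and indirect effects in the discrete counterfactual setting. -/
theorem mediation_effect_decomposition
    {Ω : Type*} [MeasurableSpace Ω] (μ : Measure Ω) [IsProbabilityMeasure μ]
    {𝓜 : Type*} [Fintype 𝓜] [MeasurableSpace 𝓜] [MeasurableSingletonClass 𝓜]
    (X : Ω → ℝ) (M : Ω → 𝓜) (Y : Ω → ℝ)
    (Mc : ℝ → Ω → 𝓜) (Yc : ℝ → 𝓜 → Ω → ℝ) (Ycx : ℝ → Ω → ℝ)
    (hX : Measurable X) (hM : Measurable M) (hY : Measurable Y)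
    (hMc : ∀ a, Measurable (Mc a)) (hYc : ∀ a m, Measurable (Yc a m))
    (hYint : Integrable Y μ) (hYcint : ∀ a m, Integrable (Yc a m) μ)
    -- (i) M^{x'} ⫫ X
    (indep₁ : ∀ a, IndepFun (Mc a) X μ)
    -- (ii) Y^{x'',m} ⫫ M^{x'}
    (indep₂ : ∀ a b m, IndepFun (Yc b m) (Mc a) μ)
    -- (iii) Y^{x'',m} ⫫ X
    (indep₃ : ∀ b m, IndepFun (Yc b m) X μ)
    -- (iv) Y^{x'',m} ⫫ M | X  (elementary product form)
    (indep₄ : ∀ b m (s : Set ℝ), MeasurableSet s → ∀ (m₀ : 𝓜) (x₀ : ℝ),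
      μ ({ω | Yc b m ω ∈ s} ∩ {ω | M ω = m₀} ∩ {ω | X ω = x₀}) * μ {ω | X ω = x₀} =
        μ ({ω | Yc b m ω ∈ s} ∩ {ω | X ω = x₀}) * μ ({ω | M ω = m₀} ∩ {ω | X ω = x₀}))
    -- (v) consistency for the mediator
    (cons₁ : ∀ a ω, X ω = a → Mc a ω = M ω)
    -- (vi) consistency for the outcome
    (cons₂ : ∀ a m ω, X ω = a → M ω = m → Yc a m ω = Y ω)
    -- composition: Y^{x} = Y^{x, M^{x}}
    (comp : ∀ a ω, Ycx a ω = Yc a (Mc a ω) ω)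
    (x' x'' : ℝ)
    (hpos' : 0 < μ {ω | X ω = x'}) (hpos'' : 0 < μ {ω | X ω = x''})
    (hposM : ∀ m : 𝓜, 0 < μ {ω | X ω = x' ∧ M ω = m} ∧
      0 < μ {ω | X ω = x'' ∧ M ω = m}) :
    ((∫ ω, Ycx x'' ω ∂μ) - (∫ ω, Ycx x' ω ∂μ) =
        ((∫ ω, Yc x'' (Mc x' ω) ω ∂μ) - (∫ ω, Ycx x' ω ∂μ)) +
          ((∫ ω, Ycx x'' ω ∂μ) - (∫ ω, Yc x'' (Mc x' ω) ω ∂μ))) ∧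
    ((∫ ω, Yc x'' (Mc x' ω) ω ∂μ) - (∫ ω, Ycx x' ω ∂μ) =
        ∑ m : 𝓜,
          (((∫ ω in {ω | X ω = x'' ∧ M ω = m}, Y ω ∂μ) /
              (μ {ω | X ω = x'' ∧ M ω = m}).toReal) -
            ((∫ ω in {ω | X ω = x' ∧ M ω = m}, Y ω ∂μ) /
              (μ {ω | X ω = x' ∧ M ω = m}).toReal)) *
            ((μ {ω | X ω = x' ∧ M ω = m}).toReal / (μ {ω | X ω = x'}).toReal)) ∧
    ((∫ ω, Ycx x'' ω ∂μ) - (∫ ω, Yc x'' (Mc x' ω) ω ∂μ) =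
        ∑ m : 𝓜,
          ((∫ ω in {ω | X ω = x'' ∧ M ω = m}, Y ω ∂μ) /
              (μ {ω | X ω = x'' ∧ M ω = m}).toReal) *
            (((μ {ω | X ω = x'' ∧ M ω = m}).toReal / (μ {ω | X ω = x''}).toReal) -
              ((μ {ω | X ω = x' ∧ M ω = m}).toReal / (μ {ω | X ω = x'}).toReal))) :=
  mediation_effect_decomposition_general μ X M Y Mc Yc Ycx hX hM hMc hYc hYcint indep₁ indep₂ indep₃
    indep₄ cons₁ cons₂ comp x' x'' hpos' hpos'' hposM
end
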